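/- arXiv:2111.07570 — 3 statements merged into one kernel-verified Lean document; each statement's English description precedes it below -/
import Mathlib

section
/- Let R ≥ 1, let c ∈ [0, R], and let τ > 0 satisfy 2R²τ < 1. Then the function a₀ : ℝ → ℝ defined by a₀(s) = s/τ − c · s · min{max(1 − s, 0), R} is strictly increasing on ℝ. -/
/-!
`Q_R` is monotone, `1`-Lipschitz and takes values in `[0, R]`, so `s ↦ s · Q_R(1 - s)` increases
at rate at most `2R`. With `0 ≤ c ≤ R` the subtracted term increases at rate at most `2R²`,
which is less than the slope `1/τ` of the first term.
-/

/-- The truncation `Q_R(r) = min{max(r,0), R}`. -/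
noncomputable def QR (R r : ℝ) : ℝ := min (max r 0) R

section Truncation

variable {R r r' : ℝ}

lemma QR_nonneg (hR : 0 ≤ R) : 0 ≤ QR R r :=
  le_min (le_max_right _ _) hR

lemma QR_le : QR R r ≤ R := min_le_right _ _

lemma QR_of_le (h : R ≤ r) : QR R r = R := by
  unfold QR
  grind

lemma QR_mono (h : r ≤ r') : QR R r ≤ QR R r' :=
  min_le_min_right R (max_le_max_right 0 h)

lemma QR_sub_le_sub (h : r ≤ r') : QR R r' - QR R r ≤ r' - r := by
  unfold QR
  grind

end Truncation

lemma mul_QR_one_sub_sub_le {R s t : ℝ} (hR : 0 ≤ R) (hst : s ≤ t) :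
    t * QR R (1 - t) - s * QR R (1 - s) ≤ 2 * R * (t - s) := by
  set a := QR R (1 - t)
  set b := QR R (1 - s)
  have ha : 0 ≤ a := QR_nonneg hR
  have hbR : b ≤ R := QR_le
  have hab : a ≤ b := QR_mono (by linarith)
  have hlip : b - a ≤ t - s := by
    have := QR_sub_le_sub (R := R) (show 1 - t ≤ 1 - s by linarith)
    linarith
  have hsplit : t * a - s * b = (t - s) * b - t * (b - a) := by ring
  have hfirst : (t - s) * b ≤ R * (t - s) := by nlinarith
  -- `-t (b - a)` is positive only when `t < 0`, and then `a < R` forces `-t < R - 1`.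
  have hsecond : -t * (b - a) ≤ R * (t - s) := by
    rcases le_or_gt 0 t with ht | ht
    · nlinarith
    rcases le_or_gt R (1 - t) with htR | htR
    · have hb : b = R := QR_of_le (by linarith)
      have ha' : a = R := QR_of_le htR
      rw [hb, ha', sub_self, mul_zero]
      nlinarith
    · nlinarith
  linarith

theorem stmt_6_general (R c τ : ℝ) (hc : c ∈ Set.Icc 0 R)
    (hτ : 0 < τ) (hRτ : 2 * R ^ 2 * τ < 1) :
    StrictMono (fun s : ℝ => s / τ - c * s * QR R (1 - s)) := by
  obtain ⟨hc0, hcR⟩ := hc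
  have hR : 0 ≤ R := hc0.trans hcR
  intro s t hst
  have hbound := mul_QR_one_sub_sub_le hR hst.le
  have hdiff : 0 < t - s := sub_pos.mpr hst
  have hreaction : c * (t * QR R (1 - t) - s * QR R (1 - s)) ≤ 2 * R ^ 2 * (t - s) :=
    calc c * (t * QR R (1 - t) - s * QR R (1 - s)) ≤ c * (2 * R * (t - s)) :=
          mul_le_mul_of_nonneg_left hbound hc0
      _ ≤ R * (2 * R * (t - s)) := by gcongr
      _ = 2 * R ^ 2 * (t - s) := by ring
  have hdiffusion : 2 * R ^ 2 * (t - s) < (t - s) / τ := by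
    rw [lt_div_iff₀ hτ]
    nlinarith
  have hexpand : (t / τ - c * t * QR R (1 - t)) - (s / τ - c * s * QR R (1 - s))
      = (t - s) / τ - c * (t * QR R (1 - t) - s * QR R (1 - s)) := by ring
  show s / τ - c * s * QR R (1 - s) < t / τ - c * t * QR R (1 - t)
  linarith

/-- Let `R ≥ 1`, `c ∈ [0, R]`, and `τ > 0` with `2R²τ < 1`. Then
`a₀(s) = s/τ − c·s·Q_R(1 − s)` is strictly increasing on `ℝ`. -/
theorem stmt_6 (R c τ : ℝ) (hR : 1 ≤ R) (hc : c ∈ Set.Icc 0 R)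
    (hτ : 0 < τ) (hRτ : 2 * R ^ 2 * τ < 1) :
    StrictMono (fun s : ℝ => s / τ - c * s * QR R (1 - s)) :=
  stmt_6_general R c τ hc hτ hRτ
end

section
/- Let M > 0 and k > 0 be real parameters. For every h ≥ 0, one has G_{M,k}(h) ≤ Γ_{M,k}(h)² ≤ 4·G_{M,k}(h). -/
/-- The truncated power `g_{M,k}` used in the Moser iteration. Real powers. -/
noncomputable def gMk (M k h : ℝ) : ℝ :=
  if h ≤ M then h ^ (2 * k + 1) / (2 * k + 1)
  else M ^ (2 * k + 1) / (2 * k + 1) + M ^ (2 * k) * (h - M)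

/-- The antiderivative `G_{M,k}` of `g_{M,k}`. Real powers. -/
noncomputable def GMk (M k h : ℝ) : ℝ :=
  if h ≤ M then h ^ (2 * k + 2) / ((2 * k + 2) * (2 * k + 1))
  else M ^ (2 * k + 2) / ((2 * k + 2) * (2 * k + 1))
    + M ^ (2 * k + 1) * (h - M) / (2 * k + 1) + M ^ (2 * k) * (h - M) ^ 2 / 2

/-- The antiderivative `Γ_{M,k}` of `√(g_{M,k}')`. Real powers. -/
noncomputable def GammaMk (M k h : ℝ) : ℝ :=
  if h ≤ M then h ^ (k + 1) / (k + 1)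
  else M ^ (k + 1) / (k + 1) + M ^ k * (h - M)

/-!
With `x = min(h, M)^(k+1)` and `y = M^k (h - M)⁺` (so `x y ≥ 0`), on both branches
`Γ = x/(k+1) + y` and `G = x²/((2k+2)(2k+1)) + x y/(2k+1) + y²/2`. Then
`Γ² - G = (3k+1)/((k+1)(2k+1)) (x²/(2(k+1)) + x y) + y²/2` and
`4G - Γ² = x²/((k+1)²(2k+1)) + 2 x y/((k+1)(2k+1)) + y²`, and all terms are nonnegative.
-/

lemma quadratic_le_sq (k x y : ℝ) (hk : -1 / 3 ≤ k) (hxy : 0 ≤ x * y) :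
    x ^ 2 / ((2 * k + 2) * (2 * k + 1)) + x * y / (2 * k + 1) + y ^ 2 / 2
      ≤ (x / (k + 1) + y) ^ 2 := by
  have hk1 : 0 < k + 1 := by linarith
  have h2k1 : 0 < 2 * k + 1 := by linarith
  have gap : (x / (k + 1) + y) ^ 2
      - (x ^ 2 / ((2 * k + 2) * (2 * k + 1)) + x * y / (2 * k + 1) + y ^ 2 / 2)
      = (3 * k + 1) / ((k + 1) * (2 * k + 1)) * (x ^ 2 / (2 * (k + 1)) + x * y)
        + y ^ 2 / 2 := by
    -- `field_simp` only clears the denominator in its normal form `k * 2 + 1`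
    field_simp [show k * 2 + 1 ≠ 0 by linarith]
    ring
  have h3k1 : 0 ≤ 3 * k + 1 := by linarith
  have : 0 ≤ (3 * k + 1) / ((k + 1) * (2 * k + 1)) * (x ^ 2 / (2 * (k + 1)) + x * y)
      + y ^ 2 / 2 := by positivity
  linarith

lemma sq_le_four_mul_quadratic (k x y : ℝ) (hk : -1 / 2 < k) (hxy : 0 ≤ x * y) :
    (x / (k + 1) + y) ^ 2
      ≤ 4 * (x ^ 2 / ((2 * k + 2) * (2 * k + 1)) + x * y / (2 * k + 1) + y ^ 2 / 2) := by
  have hk1 : 0 < k + 1 := by linarith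
  have h2k1 : 0 < 2 * k + 1 := by linarith
  have gap : 4 * (x ^ 2 / ((2 * k + 2) * (2 * k + 1)) + x * y / (2 * k + 1) + y ^ 2 / 2)
      - (x / (k + 1) + y) ^ 2
      = x ^ 2 / ((k + 1) ^ 2 * (2 * k + 1)) + 2 * (x * y) / ((k + 1) * (2 * k + 1))
        + y ^ 2 := by
    field_simp
    ring
  have : 0 ≤ x ^ 2 / ((k + 1) ^ 2 * (2 * k + 1)) + 2 * (x * y) / ((k + 1) * (2 * k + 1))
      + y ^ 2 := by positivity
  linarith

lemma exists_GammaMk_GMk_eq_quadratic (M k h : ℝ) (hM : 0 < M) (hh : 0 ≤ h) :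
    ∃ x y : ℝ, 0 ≤ x * y ∧ GammaMk M k h = x / (k + 1) + y ∧
      GMk M k h = x ^ 2 / ((2 * k + 2) * (2 * k + 1)) + x * y / (2 * k + 1) + y ^ 2 / 2 := by
  by_cases hle : h ≤ M
  · refine ⟨h ^ (k + 1), 0, by simp, by simp [GammaMk, hle], ?_⟩
    have hsq : h ^ (2 * k + 2) = (h ^ (k + 1)) ^ 2 := by
      rw [← Real.rpow_mul_natCast hh]
      ring_nf
    simp [GMk, hle, hsq]
  · refine ⟨M ^ (k + 1), M ^ k * (h - M), ?_, by simp [GammaMk, hle], ?_⟩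
    · have : 0 ≤ h - M := by linarith
      positivity
    · have hpow (a b : ℝ) : M ^ (a + b) = M ^ a * M ^ b := Real.rpow_add hM a b
      have h2 : M ^ (2 * k + 2) = M ^ (k + 1) * M ^ (k + 1) := by rw [← hpow]; ring_nf
      have h1 : M ^ (2 * k + 1) = M ^ (k + 1) * M ^ k := by rw [← hpow]; ring_nf
      have h0 : M ^ (2 * k) = M ^ k * M ^ k := by rw [← hpow]; ring_nf
      simp only [GMk, hle, if_false, h2, h1, h0]
      ring

/-- For `M > 0`, `k > 0` and every `h >= 0`:
`G_{M,k}(h) <= Γ_{M,k}(h)^2 <= 4 G_{M,k}(h)`. -/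
theorem stmt_9 (M k : ℝ) (hM : 0 < M) (hk : 0 < k) (h : ℝ) (hh : 0 ≤ h) :
    GMk M k h ≤ (GammaMk M k h) ^ 2 ∧ (GammaMk M k h) ^ 2 ≤ 4 * GMk M k h := by
  obtain ⟨x, y, hxy, hΓ, hG⟩ := exists_GammaMk_GMk_eq_quadratic M k h hM hh
  rw [hΓ, hG]
  exact ⟨quadratic_le_sq k x y (by linarith) hxy, sq_le_four_mul_quadratic k x y (by linarith) hxy⟩
end

section
/- Let M > 0 and k > 0 be real parameters. For every h ≥ 0, one has h · g_{M,k}(h) ≤ (k+1) · Γ_{M,k}(h)². -/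
/-- For `M > 0`, `k > 0` and every `h >= 0`:
`h * g_{M,k}(h) <= (k+1) * Γ_{M,k}(h)^2`. -/
theorem stmt_11 (M k : ℝ) (hM : 0 < M) (hk : 0 < k) (h : ℝ) (hh : 0 ≤ h) :
    h * gMk M k h ≤ (k + 1) * (GammaMk M k h) ^ 2 := by
  have hk1 : (0:ℝ) < k + 1 := by linarith
  have hk2 : (0:ℝ) < 2 * k + 1 := by linarith
  unfold gMk GammaMk
  split_ifs with hhM
  · rcases eq_or_lt_of_le hh with h0 | h0
    · subst h0
      rw [Real.zero_rpow (by positivity), Real.zero_rpow (by positivity)]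
      norm_num
    · have hmul : h * h ^ (2 * k + 1) = h ^ (2 * k + 2) := by
        rw [mul_comm, ← Real.rpow_add_one (ne_of_gt h0)]; ring_nf
      have hsq : (h ^ (k + 1)) ^ 2 = h ^ (2 * k + 2) := by
        rw [← Real.rpow_natCast (h ^ (k+1)) 2, ← Real.rpow_mul hh]
        norm_num; ring_nf
      have hX : 0 ≤ h ^ (2 * k + 2) := Real.rpow_nonneg hh _
      calc h * (h ^ (2 * k + 1) / (2 * k + 1)) = h ^ (2 * k + 2) / (2 * k + 1) := by
            rw [← hmul]; ring
        _ ≤ h ^ (2 * k + 2) / (k + 1) := by gcongr; linarith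
        _ = (k + 1) * (h ^ (k + 1) / (k + 1)) ^ 2 := by
            rw [div_pow, hsq]; field_simp
  · push_neg at hhM
    have hA : 0 < M ^ k := Real.rpow_pos_of_pos hM k
    set A := M ^ k with hAdef
    have e0 : M ^ (2 * k) = A ^ 2 := by
      rw [show 2 * k = k + k by ring, Real.rpow_add hM, hAdef]; ring
    have e1 : M ^ (2 * k + 1) = A ^ 2 * M := by
      rw [Real.rpow_add_one (ne_of_gt hM), e0]
    have e2 : M ^ (k + 1) = A * M := by
      rw [Real.rpow_add_one (ne_of_gt hM), hAdef]
    rw [e0, e1, e2]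
    have key : (k+1) * (A*M/(k+1) + A*(h-M))^2 - h * (A^2*M/(2*k+1) + A^2*(h-M))
        = A^2 * (k*M^2/((k+1)*(2*k+1)) + 2*k*M*(h-M)/(2*k+1) + k*(h-M)^2) := by
      field_simp
      ring
    have hpos : 0 ≤ A^2 * (k*M^2/((k+1)*(2*k+1)) + 2*k*M*(h-M)/(2*k+1) + k*(h-M)^2) := by
      have ht : 0 ≤ h - M := by linarith
      positivity
    linarith [key, hpos]
end
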